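/- With zero tokens, either every maximal colouring sequence on a communication graph G completes, or every maximal colouring sequence on G deadlocks; i.e., completion of one colouring sequence implies completion of all maximal colouring sequences. -/

import Mathlib

/-! Formal framework: communication graphs and the red/yellow/green colouring game
(Brodsky–Pedersen–Wagner, "On the Complexity of Buffer Allocation in Message Passing Systems"),
with receive-side token pools. -/

inductive Colour : Type
  | red | yellow | green
deriving DecidableEq

/-- A communication graph: vertices are partitioned into start/send/receive/end vertices,
`pred u v` means `u` is the component predecessor of `v` (a process arc `u → v`),
`matched u v` is a communication arc from send `u` to its matching receive `v`,
`comp v` is the index of the process component of `v`, and `pos v` is the position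
of `v` within its component chain. -/
structure CommGraph (V : Type) where
  isStart : V → Prop
  isSend : V → Prop
  isRecv : V → Prop
  isEnd : V → Prop
  pred : V → V → Prop
  matched : V → V → Prop
  comp : V → ℕ
  pos : V → ℕ

namespace CommGraph

variable {V : Type}

/-- An arc of the communication graph (process arc or communication arc). -/
def GArc (G : CommGraph V) (u v : V) : Prop := G.pred u v ∨ G.matched u v

/-- Well-formedness of a communication graph: the vertex kinds partition `V`,
components are chains (unique predecessors, positions increase along process arcs),
communication arcs go from sends to receives in different components and form a
partial matching, and the graph is acyclic (arcs admit no infinite descent). -/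
structure WF (G : CommGraph V) : Prop where
  kinds : ∀ v, G.isStart v ∨ G.isSend v ∨ G.isRecv v ∨ G.isEnd v
  start_not_send : ∀ v, G.isStart v → ¬ G.isSend v
  start_not_recv : ∀ v, G.isStart v → ¬ G.isRecv v
  start_not_end : ∀ v, G.isStart v → ¬ G.isEnd v
  send_not_recv : ∀ v, G.isSend v → ¬ G.isRecv v
  send_not_end : ∀ v, G.isSend v → ¬ G.isEnd v
  recv_not_end : ∀ v, G.isRecv v → ¬ G.isEnd v
  pred_unique : ∀ {u u' v}, G.pred u v → G.pred u' v → u = u'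
  pred_comp : ∀ {u v}, G.pred u v → G.comp u = G.comp v
  pred_pos : ∀ {u v}, G.pred u v → G.pos v = G.pos u + 1
  start_no_pred : ∀ {u v}, G.pred u v → ¬ G.isStart v
  has_pred : ∀ v, ¬ G.isStart v → ∃ u, G.pred u v
  matched_send : ∀ {u v}, G.matched u v → G.isSend u
  matched_recv : ∀ {u v}, G.matched u v → G.isRecv v
  matched_comp : ∀ {u v}, G.matched u v → G.comp u ≠ G.comp v
  matched_unique_left : ∀ {u u' v}, G.matched u v → G.matched u' v → u = u'
  matched_unique_right : ∀ {u v v'}, G.matched u v → G.matched u v' → v = v'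
  send_has_match : ∀ v, G.isSend v → ∃ w, G.matched v w
  recv_has_match : ∀ v, G.isRecv v → ∃ w, G.matched w v
  dag : WellFounded fun u v => G.GArc u v

end CommGraph

/-- A state of the colouring game: the colouring, which receive vertices currently
hold a token on their incident communication arc, and the number of available
tokens in each (per-process, receive-side) pool. -/
structure St (V : Type) where
  col : V → Colour
  tok : V → Bool
  pool : ℕ → ℕ

/-- The names of the colouring rules. -/
inductive Rule : Type
  | sendYel | recvYel | recvYelTok | sendGrn | recvGrn | endYel | endGrn
deriving DecidableEq

variable {V : Type}

/-- One move of the colouring game (receive-side buffering: the token used by the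
buffered-receive rule `recvYelTok` comes from the pool of the receiving component,
and is returned when the receive turns green). -/
inductive Step [DecidableEq V] (G : CommGraph V) : Rule → St V → St V → Prop
  | sendYel {s : St V} {v u : V} :
      G.isSend v → s.col v = .red → G.pred u v → s.col u = .green →
      Step G .sendYel s ⟨Function.update s.col v .yellow, s.tok, s.pool⟩
  | recvYel {s : St V} {v u w : V} :
      G.isRecv v → s.col v = .red → G.matched w v → s.col w = .yellow →
      G.pred u v → s.col u = .green →
      Step G .recvYel s ⟨Function.update s.col v .yellow, s.tok, s.pool⟩
  | recvYelTok {s : St V} {v w : V} :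
      G.isRecv v → s.col v = .red → G.matched w v → s.col w = .yellow →
      0 < s.pool (G.comp v) →
      Step G .recvYelTok s ⟨Function.update s.col v .yellow,
        Function.update s.tok v true,
        Function.update s.pool (G.comp v) (s.pool (G.comp v) - 1)⟩
  | sendGrn {s : St V} {v r : V} :
      G.isSend v → s.col v = .yellow → G.matched v r → s.col r = .yellow →
      Step G .sendGrn s ⟨Function.update s.col v .green, s.tok, s.pool⟩
  | recvGrn {s : St V} {v u w : V} :
      G.isRecv v → s.col v = .yellow → G.pred u v → s.col u = .green →
      G.matched w v → s.col w = .green →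
      Step G .recvGrn s ⟨Function.update s.col v .green,
        Function.update s.tok v false,
        if s.tok v then
          Function.update s.pool (G.comp v) (s.pool (G.comp v) + 1)
        else s.pool⟩
  | endYel {s : St V} {v u : V} :
      G.isEnd v → s.col v = .red → G.pred u v → s.col u = .green →
      Step G .endYel s ⟨Function.update s.col v .yellow, s.tok, s.pool⟩
  | endGrn {s : St V} {v : V} :
      G.isEnd v → s.col v = .yellow →
      Step G .endGrn s ⟨Function.update s.col v .green, s.tok, s.pool⟩

/-- `IsSeq G s l` : the list `l` of (rule, state) pairs is a valid colouring sequence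
starting from state `s`. -/
def IsSeq [DecidableEq V] (G : CommGraph V) : St V → List (Rule × St V) → Prop
  | _, [] => True
  | s, p :: l => Step G p.1 s p.2 ∧ IsSeq G p.2 l

/-- The list of states visited by a colouring sequence. -/
def states (s0 : St V) (l : List (Rule × St V)) : List (St V) :=
  s0 :: l.map Prod.snd

/-- The final state of a colouring sequence. -/
def finalSt (s0 : St V) (l : List (Rule × St V)) : St V :=
  (states s0 l).getLast (by simp [states])

open Classical in
/-- The initial state: start vertices green, all others red, no tokens placed,
token pools given by the token assignment `B` (pool of component `i` holds `B i`). -/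
noncomputable def init (G : CommGraph V) (B : ℕ → ℕ) : St V :=
  ⟨fun v => if G.isStart v then Colour.green else Colour.red, fun _ => false, B⟩

/-- A state from which no colouring rule applies. -/
def MaximalFrom [DecidableEq V] (G : CommGraph V) (s : St V) : Prop :=
  ∀ ρ t, ¬ Step G ρ s t

/-- A state is complete when every vertex is green. -/
def Completes (s : St V) : Prop := ∀ v, s.col v = Colour.green

/-- A deadlocking colouring sequence from `s0`: a maximal sequence whose final
colouring has a non-green vertex. -/
def Deadlocks [DecidableEq V] (G : CommGraph V) (s0 : St V) (l : List (Rule × St V)) : Prop :=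
  IsSeq G s0 l ∧ MaximalFrom G (finalSt s0 l) ∧ ¬ Completes (finalSt s0 l)

/-- The system is safe (deadlock free) under token assignment `B`:
every maximal colouring sequence completes. -/
def DeadlockFree [DecidableEq V] (G : CommGraph V) (B : ℕ → ℕ) : Prop :=
  ∀ l, IsSeq G (init G B) l → MaximalFrom G (finalSt (init G B) l) →
    Completes (finalSt (init G B) l)

/-- A state blocks: some yellow send has a matching red receive to which the
buffered-receive rule cannot be applied (no token available). -/
def Blocked (G : CommGraph V) (s : St V) : Prop :=
  ∃ v r, G.matched v r ∧ s.col v = Colour.yellow ∧ s.col r = Colour.red ∧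
    s.pool (G.comp r) = 0

/-- The graph is block free under token assignment `B`: no colouring sequence blocks. -/
def BlockFree [DecidableEq V] (G : CommGraph V) (B : ℕ → ℕ) : Prop :=
  ∀ l, IsSeq G (init G B) l → ¬ Blocked G (finalSt (init G B) l)


/-!
Let `t` be the final state of a maximal colouring sequence. Without tokens, every
colouring sequence from the initial state stays pointwise below `t` for the order
`red < yellow < green`: the first move climbing above `t` would already be available
at `t`, which is maximal. The one delicate case is a vertex whose matched partner is
green in `t` but yellow in the other sequence; it is excluded by the invariant
`MatchCoherent` (a green send has a non-red receive, a green receive has a green send).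
So the all-green final state of a completing sequence lies below `t`, and `t` is all green.
-/

namespace Colour

def rank : Colour → ℕ
  | red => 0
  | yellow => 1
  | green => 2

instance : LinearOrder Colour :=
  LinearOrder.lift' rank fun a b h => by cases a <;> cases b <;> first | rfl | cases h

lemma yellow_le_iff {c : Colour} : yellow ≤ c ↔ c ≠ red := by
  cases c <;> decide

lemma green_le_iff {c : Colour} : green ≤ c ↔ c = green := by
  cases c <;> decide

lemma eq_yellow_of_yellow_le {c : Colour} (h : yellow ≤ c) (hc : c ≠ green) : c = yellow := by
  cases c <;> simp_all [yellow_le_iff]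

lemma eq_green_of_le {a b : Colour} (h : a ≤ b) (ha : a = green) : b = green :=
  green_le_iff.1 (ha ▸ h)

end Colour

open Colour Function

def MatchCoherent (G : CommGraph V) (c : V → Colour) : Prop :=
  ∀ ⦃w v⦄, G.matched w v → (c w = green → c v ≠ red) ∧ (c v = green → c w = green)

def Tokenless (s : St V) : Prop := (∀ i, s.pool i = 0) ∧ ∀ v, s.tok v = false

section Game

variable {G : CommGraph V}

lemma matchCoherent_init (hwf : G.WF) (B : ℕ → ℕ) : MatchCoherent G (init G B).col := by
  intro w v hm
  have hw : ¬ G.isStart w := fun h => hwf.start_not_send w h (hwf.matched_send hm)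
  have hv : ¬ G.isStart v := fun h => hwf.start_not_recv v h (hwf.matched_recv hm)
  simp [init, hw, hv]

variable [DecidableEq V]

lemma MatchCoherent.update_yellow {c : V → Colour} {x : V} (h : MatchCoherent G c)
    (hx : c x = red) : MatchCoherent G (update c x yellow) := by
  intro w v hm
  obtain ⟨h₁, h₂⟩ := h hm
  simp only [update_apply]
  split_ifs <;> simp_all

lemma MatchCoherent.update_green {c : V → Colour} {x : V} (h : MatchCoherent G c)
    (hsend : ∀ v, G.matched x v → c v ≠ red) (hrecv : ∀ w, G.matched w x → c w = green) :
    MatchCoherent G (update c x green) := by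
  intro w v hm
  obtain ⟨h₁, h₂⟩ := h hm
  simp only [update_apply]
  split_ifs <;> simp_all

lemma Step.matchCoherent (hwf : G.WF) {ρ : Rule} {s s' : St V} (hstep : Step G ρ s s')
    (h : MatchCoherent G s.col) : MatchCoherent G s'.col := by
  cases hstep with
  | sendYel _ hred => exact h.update_yellow hred
  | recvYel _ hred => exact h.update_yellow hred
  | recvYelTok _ hred => exact h.update_yellow hred
  | endYel _ hred => exact h.update_yellow hred
  | sendGrn hsend _ hm hr =>
    refine h.update_green (fun v hv => ?_) fun w hw => ?_
    · rw [hwf.matched_unique_right hv hm, hr]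
      decide
    · exact absurd (hwf.matched_recv hw) (hwf.send_not_recv _ hsend)
  | recvGrn hrecv _ _ _ hm hw =>
    refine h.update_green (fun v hv => ?_) fun w' hw' => ?_
    · exact absurd (hwf.matched_send hv) fun hs => hwf.send_not_recv _ hs hrecv
    · rwa [hwf.matched_unique_left hw' hm]
  | endGrn hend =>
    refine h.update_green (fun v hv => ?_) fun w hw => ?_
    · exact absurd (hwf.matched_send hv) fun hs => hwf.send_not_end _ hs hend
    · exact absurd (hwf.matched_recv hw) fun hr => hwf.recv_not_end _ hr hend

lemma Step.col_le {ρ : Rule} {s s' : St V} (hstep : Step G ρ s s') : s.col ≤ s'.col := by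
  cases hstep <;> simp_all [le_update_self_iff] <;> decide

lemma Step.tokenless {ρ : Rule} {s s' : St V} (hstep : Step G ρ s s') (h : Tokenless s) :
    Tokenless s' := by
  obtain ⟨hpool, htok⟩ := h
  cases hstep with
  | recvYelTok _ _ _ _ hpos => exact absurd (hpool _) hpos.ne'
  | recvGrn => simp_all [Tokenless, update_apply]
  | _ => exact ⟨hpool, htok⟩

/-- A step that would climb above `t` could be taken from `t` itself. -/
lemma Step.col_le_of_maximalFrom {t : St V} (hmax : MaximalFrom G t)
    (hcoh : MatchCoherent G t.col) {ρ : Rule} {s s' : St V} (hstep : Step G ρ s s')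
    (hpool : ∀ i, s.pool i = 0) (hle : s.col ≤ t.col) : s'.col ≤ t.col := by
  cases hstep with
  | @sendYel _ x u hsend _ hpred hu =>
    refine update_le_iff.2 ⟨yellow_le_iff.2 fun hx => ?_, fun j _ => hle j⟩
    exact hmax _ _ (.sendYel hsend hx hpred (eq_green_of_le (hle u) hu))
  | @recvYel _ x u w hrecv _ hm hw hpred hu =>
    refine update_le_iff.2 ⟨yellow_le_iff.2 fun hx => ?_, fun j _ => hle j⟩
    have hw' : t.col w = yellow :=
      eq_yellow_of_yellow_le (hw ▸ hle w) fun hg => (hcoh hm).1 hg hx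
    exact hmax _ _ (.recvYel hrecv hx hm hw' hpred (eq_green_of_le (hle u) hu))
  | recvYelTok _ _ _ _ hpos => exact absurd (hpool _) hpos.ne'
  | @sendGrn _ x r hsend hx hm hr =>
    refine update_le_iff.2 ⟨green_le_iff.2 ?_, fun j _ => hle j⟩
    by_contra hng
    have hx' : t.col x = yellow := eq_yellow_of_yellow_le (hx ▸ hle x) hng
    have hr' : t.col r = yellow :=
      eq_yellow_of_yellow_le (hr ▸ hle r) fun hg => hng ((hcoh hm).2 hg)
    exact hmax _ _ (.sendGrn hsend hx' hm hr')
  | @recvGrn _ x u w hrecv hx hpred hu hm hw =>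
    refine update_le_iff.2 ⟨green_le_iff.2 ?_, fun j _ => hle j⟩
    by_contra hng
    have hx' : t.col x = yellow := eq_yellow_of_yellow_le (hx ▸ hle x) hng
    exact hmax _ _ (.recvGrn hrecv hx' hpred (eq_green_of_le (hle u) hu) hm
      (eq_green_of_le (hle w) hw))
  | @endYel _ x u hend _ hpred hu =>
    refine update_le_iff.2 ⟨yellow_le_iff.2 fun hx => ?_, fun j _ => hle j⟩
    exact hmax _ _ (.endYel hend hx hpred (eq_green_of_le (hle u) hu))
  | @endGrn _ x hend hx =>
    refine update_le_iff.2 ⟨green_le_iff.2 ?_, fun j _ => hle j⟩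
    by_contra hng
    exact hmax _ _ (.endGrn hend (eq_yellow_of_yellow_le (hx ▸ hle x) hng))

variable (G) in
def Reaches : St V → St V → Prop := Relation.ReflTransGen fun s s' => ∃ ρ, Step G ρ s s'

lemma IsSeq.reaches : ∀ {s : St V} {l : List (Rule × St V)}, IsSeq G s l →
    Reaches G s (finalSt s l)
  | _, [], _ => .refl
  | s, p :: l, ⟨hstep, hl⟩ => by
    have hlast : finalSt s (p :: l) = finalSt p.2 l := by
      simp [finalSt, states, List.getLast_cons]
    rw [hlast]
    exact .head ⟨p.1, hstep⟩ hl.reaches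

lemma Reaches.col_le {s s' : St V} (h : Reaches G s s') : s.col ≤ s'.col := by
  induction h with
  | refl => exact le_rfl
  | tail _ hstep ih =>
    obtain ⟨_, hstep⟩ := hstep
    exact ih.trans hstep.col_le

lemma Reaches.matchCoherent (hwf : G.WF) {s s' : St V} (h : Reaches G s s')
    (hs : MatchCoherent G s.col) : MatchCoherent G s'.col := by
  induction h with
  | refl => exact hs
  | tail _ hstep ih =>
    obtain ⟨_, hstep⟩ := hstep
    exact hstep.matchCoherent hwf ih

lemma Reaches.col_le_of_maximalFrom {t : St V} (hmax : MaximalFrom G t)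
    (hcoh : MatchCoherent G t.col) {s s' : St V} (h : Reaches G s s')
    (hs : Tokenless s) (hle : s.col ≤ t.col) : s'.col ≤ t.col := by
  suffices Tokenless s' ∧ s'.col ≤ t.col from this.2
  induction h with
  | refl => exact ⟨hs, hle⟩
  | tail _ hstep ih =>
    obtain ⟨_, hstep⟩ := hstep
    exact ⟨hstep.tokenless ih.1, hstep.col_le_of_maximalFrom hmax hcoh ih.1.1 ih.2⟩

end Game

theorem zero_token_confluence_general {V : Type} [DecidableEq V]
    (G : CommGraph V) (hwf : G.WF)
    (hc : ∃ l, IsSeq G (init G fun _ => 0) l ∧ Completes (finalSt (init G fun _ => 0) l)) :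
    ∀ l, IsSeq G (init G fun _ => 0) l →
      MaximalFrom G (finalSt (init G fun _ => 0) l) →
      Completes (finalSt (init G fun _ => 0) l) := by
  obtain ⟨l₀, hl₀, hcomplete⟩ := hc
  intro l hl hmax v
  have hreach := hl.reaches
  have hbelow := hl₀.reaches.col_le_of_maximalFrom hmax
    (hreach.matchCoherent hwf (matchCoherent_init hwf _)) ⟨fun _ => rfl, fun _ => rfl⟩
    hreach.col_le
  exact eq_green_of_le (hbelow v) (hcomplete v)

/-- **Zero-token confluence.** With zero tokens, either every maximal colouring
sequence on a communication graph `G` completes or every maximal colouring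
sequence deadlocks: completion of one colouring sequence implies completion of
all maximal colouring sequences. -/
theorem zero_token_confluence {V : Type} [DecidableEq V] [Fintype V]
    (G : CommGraph V) (hwf : G.WF)
    (hc : ∃ l, IsSeq G (init G fun _ => 0) l ∧ Completes (finalSt (init G fun _ => 0) l)) :
    ∀ l, IsSeq G (init G fun _ => 0) l →
      MaximalFrom G (finalSt (init G fun _ => 0) l) →
      Completes (finalSt (init G fun _ => 0) l) :=
  zero_token_confluence_general G hwf hc
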